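/- For the three-web on the domain {(x¹,x²,y¹,y²) ∈ ℝ⁴ : y¹ ≠ −1, y² ≠ −1, x¹x² ≠ 1} given by f¹ = x¹ + y¹ + x¹y², f² = x² + y² + x²y¹, write a₁ = 1/((1+y¹)(1−x¹x²)) and a₂ = 1/((1+y²)(1−x¹x²)) for the components of its torsion covector. Then the covariant derivatives satisfy p₁₁ = p₂₂ = 0, p₁₂ = q₁₂ = a₁(a₁x¹ + a₂), p₂₁ = q₂₁ = a₂(a₂x² + a₁), q₁₁ = −a₁(a₂x² + a₁), q₂₂ = −a₂(a₁x¹ + a₂), and hence the isoclinicity invariants satisfy p = q = (a₁²x¹ − a₂²x²)/2 (so this web belongs to the classes E₁₃₁ and G₃). -/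

import Mathlib

noncomputable section

open Matrix

/-- Partial derivative of `g` with respect to the `j`-th coordinate at the point `x`. -/
def pd (j : Fin 2) (g : (Fin 2 → ℝ) → ℝ) (x : Fin 2 → ℝ) : ℝ :=
  deriv (fun t => g (Function.update x j t)) (x j)

variable (f : Fin 2 → (Fin 2 → ℝ) → (Fin 2 → ℝ) → ℝ)

/-- Jacobian matrix `f̄ = (∂fⁱ/∂xʲ)` with respect to the first group of variables. -/
def fbar (x y : Fin 2 → ℝ) : Matrix (Fin 2) (Fin 2) ℝ :=
  Matrix.of fun i j => pd j (fun x' => f i x' y) x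

/-- Jacobian matrix `f̃ = (∂fⁱ/∂yʲ)` with respect to the second group of variables. -/
def ftil (x y : Fin 2 → ℝ) : Matrix (Fin 2) (Fin 2) ℝ :=
  Matrix.of fun i j => pd j (fun y' => f i x y') y

/-- Mixed second partial derivative `∂²fⁱ/∂xˡ∂yᵐ`. -/
def d2 (i l m : Fin 2) (x y : Fin 2 → ℝ) : ℝ :=
  pd m (fun y' => pd l (fun x' => f i x' y') x) y

/-- Connection coefficients
`Γⁱⱼₖ = −∑_{l,m} (∂²fⁱ/∂xˡ∂yᵐ) ḡˡⱼ g̃ᵐₖ`, where `ḡ = f̄⁻¹`, `g̃ = f̃⁻¹`. -/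
def Gam (i j k : Fin 2) (x y : Fin 2 → ℝ) : ℝ :=
  - ∑ l : Fin 2, ∑ m : Fin 2,
      d2 f i l m x y * (fbar f x y)⁻¹ l j * (ftil f x y)⁻¹ m k

/-- Torsion covector `aⱼ = ∑ₖ (Γᵏⱼₖ − Γᵏₖⱼ)`. -/
def aCov (j : Fin 2) (x y : Fin 2 → ℝ) : ℝ :=
  ∑ k : Fin 2, (Gam f k j k x y - Gam f k k j x y)

/-- Covariant derivative `p_{ik} = ∑ₘ (∂aᵢ/∂xᵐ) ḡᵐₖ − ∑ⱼ aⱼ Γʲₖᵢ`. -/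
def pCov (i k : Fin 2) (x y : Fin 2 → ℝ) : ℝ :=
  (∑ m : Fin 2, pd m (fun x' => aCov f i x' y) x * (fbar f x y)⁻¹ m k)
    - ∑ j : Fin 2, aCov f j x y * Gam f j k i x y

/-- Covariant derivative `q_{ik} = ∑ₘ (∂aᵢ/∂yᵐ) g̃ᵐₖ − ∑ⱼ aⱼ Γʲᵢₖ`. -/
def qCov (i k : Fin 2) (x y : Fin 2 → ℝ) : ℝ :=
  (∑ m : Fin 2, pd m (fun y' => aCov f i x y') y * (ftil f x y)⁻¹ m k)
    - ∑ j : Fin 2, aCov f j x y * Gam f j i k x y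

/-- Isoclinicity invariant `p = (p₁₂ − p₂₁)/2`. -/
def pIso (x y : Fin 2 → ℝ) : ℝ := (pCov f 0 1 x y - pCov f 1 0 x y) / 2

/-- Isoclinicity invariant `q = (q₁₂ − q₂₁)/2`. -/
def qIso (x y : Fin 2 → ℝ) : ℝ := (qCov f 0 1 x y - qCov f 1 0 x y) / 2


/-- The web `f¹ = x¹ + y¹ + x¹y²`, `f² = x² + y² + x²y¹`.
(Indices: `x 0 ↦ x¹`, `x 1 ↦ x²`, `y 0 ↦ y¹`, `y 1 ↦ y²`.) -/
noncomputable def webE : Fin 2 → (Fin 2 → ℝ) → (Fin 2 → ℝ) → ℝ :=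
  ![fun x y => x 0 + y 0 + x 0 * y 1,
    fun x y => x 1 + y 1 + x 1 * y 0]

/-!
The Jacobian `f̄` of this web is diagonal, and its only nonzero mixed second derivatives are
`∂²f¹/∂x¹∂y² = ∂²f²/∂x²∂y¹ = 1`. Hence `Γⁱⱼₖ = −ḡⁱⱼ g̃ⁱ'ₖ`, where `i'` is the index other than
`i`, and the torsion covector is `aᵢ = 1/((1 + yⁱ)(1 − x¹x²))`. This closed form holds on an open
set, so the partial derivatives of `aᵢ` may be computed from it, and the covariant derivatives
follow by rational arithmetic.
-/

open Filter Topology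

lemma pd_congr_of_eventuallyEq {g h : (Fin 2 → ℝ) → ℝ} {x : Fin 2 → ℝ} (hgh : g =ᶠ[𝓝 x] h)
    (j : Fin 2) : pd j g x = pd j h x := by
  have hline : Tendsto (Function.update x j) (𝓝 (x j)) (𝓝 x) := by
    simpa using ((continuous_const (y := x)).update j continuous_id).tendsto (x j)
  exact EventuallyEq.deriv_eq (hline.eventually hgh)

lemma d2_eq_pd_fbar (f : Fin 2 → (Fin 2 → ℝ) → (Fin 2 → ℝ) → ℝ) (i l m : Fin 2)
    (x y : Fin 2 → ℝ) : d2 f i l m x y = pd m (fun y' => fbar f x y' i l) y := rfl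

section webE

variable (x y : Fin 2 → ℝ)

lemma fbar_webE : fbar webE x y = !![1 + y 1, 0; 0, 1 + y 0] := by
  ext i j
  fin_cases i <;> fin_cases j <;> simp [fbar, pd, webE, Function.update_apply]

lemma ftil_webE : ftil webE x y = !![1, x 0; x 1, 1] := by
  ext i j
  fin_cases i <;> fin_cases j <;> simp [ftil, pd, webE, Function.update_apply]

lemma inv_fbar_webE (hy : ∀ j, 1 + y j ≠ 0) :
    (fbar webE x y)⁻¹ = !![(1 + y 1)⁻¹, 0; 0, (1 + y 0)⁻¹] := by
  rw [Matrix.inv_def, fbar_webE, adjugate_fin_two_of, det_fin_two_of, Ring.inverse_eq_inv']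
  obtain ⟨hy₀, hy₁⟩ := Fin.forall_fin_two.1 hy
  ext i j
  fin_cases i <;> fin_cases j <;> simp <;> field_simp

lemma inv_ftil_webE : (ftil webE x y)⁻¹ = (1 - x 0 * x 1)⁻¹ • !![1, -x 0; -x 1, 1] := by
  rw [Matrix.inv_def, ftil_webE, adjugate_fin_two_of, det_fin_two_of, Ring.inverse_eq_inv']
  simp

lemma d2_webE (i l m : Fin 2) : d2 webE i l m x y = if l = i ∧ m ≠ i then 1 else 0 := by
  simp only [d2_eq_pd_fbar, fbar_webE]
  fin_cases i <;> fin_cases l <;> fin_cases m <;> simp [pd]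

lemma Gam_webE (i j k : Fin 2) :
    Gam webE i j k x y = -((fbar webE x y)⁻¹ i j * (ftil webE x y)⁻¹ (Fin.rev i) k) := by
  fin_cases i <;> simp [Gam, d2_webE, Fin.sum_univ_two]

lemma aCov_webE (hy : ∀ j, 1 + y j ≠ 0) (i : Fin 2) :
    aCov webE i x y = ((1 + y i) * (1 - x 0 * x 1))⁻¹ := by
  fin_cases i <;> simp [aCov, Gam_webE, inv_fbar_webE x y hy, inv_ftil_webE, Fin.sum_univ_two] <;>
    ring

lemma aCov_webE_eventuallyEq (hy : ∀ j, 1 + y j ≠ 0) (i : Fin 2) :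
    (fun y' => aCov webE i x y') =ᶠ[𝓝 y] fun y' => ((1 + y' i) * (1 - x 0 * x 1))⁻¹ := by
  have hy' : ∀ᶠ y' in 𝓝 y, ∀ j, 1 + y' j ≠ 0 := eventually_all.2 fun j =>
    (continuous_const.add (continuous_apply j)).continuousAt.eventually_ne (hy j)
  filter_upwards [hy'] with y' hy'
  exact aCov_webE x y' hy' i

lemma pd_fst_aCov_webE (hy : ∀ j, 1 + y j ≠ 0) (hx : 1 - x 0 * x 1 ≠ 0) (i m : Fin 2) :
    pd m (fun x' => aCov webE i x' y) x = x (Fin.rev m) / ((1 + y i) * (1 - x 0 * x 1) ^ 2) := by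
  have hline := (hasDerivAt_update x m (x m)).differentiableAt
  simp only [pd, aCov_webE _ y hy]
  rw [deriv_fun_inv'' (by fun_prop) (by simpa using mul_ne_zero (hy i) hx)]
  fin_cases m <;> simp <;> field_simp

lemma pd_snd_aCov_webE (hy : ∀ j, 1 + y j ≠ 0) (hx : 1 - x 0 * x 1 ≠ 0) (i m : Fin 2) :
    pd m (fun y' => aCov webE i x y') y =
      if m = i then -((1 + y i) ^ 2 * (1 - x 0 * x 1))⁻¹ else 0 := by
  have hline := (hasDerivAt_update y m (y m)).differentiableAt
  rw [pd_congr_of_eventuallyEq (aCov_webE_eventuallyEq x y hy i), pd,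
    deriv_fun_inv'' (by fun_prop) (by simpa using mul_ne_zero (hy i) hx)]
  have hyi := hy i
  fin_cases i <;> fin_cases m <;> simp <;> field_simp <;> ring

lemma pCov_webE_self (hy : ∀ j, 1 + y j ≠ 0) (hx : 1 - x 0 * x 1 ≠ 0) (i : Fin 2) :
    pCov webE i i x y = 0 := by
  obtain ⟨hy₀, hy₁⟩ := Fin.forall_fin_two.1 hy
  fin_cases i <;>
    simp [pCov, Fin.sum_univ_two, pd_fst_aCov_webE x y hy hx, aCov_webE x y hy, Gam_webE,
      inv_fbar_webE x y hy, inv_ftil_webE] <;>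
    field_simp <;> ring

lemma pCov_webE_of_ne (hy : ∀ j, 1 + y j ≠ 0) (hx : 1 - x 0 * x 1 ≠ 0) {i k : Fin 2}
    (hik : i ≠ k) :
    pCov webE i k x y = aCov webE i x y * (aCov webE i x y * x i + aCov webE k x y) := by
  obtain ⟨hy₀, hy₁⟩ := Fin.forall_fin_two.1 hy
  fin_cases i <;> fin_cases k <;> simp at hik <;>
    simp [pCov, Fin.sum_univ_two, pd_fst_aCov_webE x y hy hx, aCov_webE x y hy, Gam_webE,
      inv_fbar_webE x y hy, inv_ftil_webE] <;>
    field_simp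

lemma qCov_webE_self (hy : ∀ j, 1 + y j ≠ 0) (hx : 1 - x 0 * x 1 ≠ 0) {i k : Fin 2}
    (hik : i ≠ k) :
    qCov webE i i x y = -(aCov webE i x y * (aCov webE k x y * x k + aCov webE i x y)) := by
  obtain ⟨hy₀, hy₁⟩ := Fin.forall_fin_two.1 hy
  fin_cases i <;> fin_cases k <;> simp at hik <;>
    simp [qCov, Fin.sum_univ_two, pd_snd_aCov_webE x y hy hx, aCov_webE x y hy, Gam_webE,
      inv_fbar_webE x y hy, inv_ftil_webE] <;>
    field_simp <;> ring

lemma qCov_webE_of_ne (hy : ∀ j, 1 + y j ≠ 0) (hx : 1 - x 0 * x 1 ≠ 0) {i k : Fin 2}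
    (hik : i ≠ k) :
    qCov webE i k x y = aCov webE i x y * (aCov webE i x y * x i + aCov webE k x y) := by
  obtain ⟨hy₀, hy₁⟩ := Fin.forall_fin_two.1 hy
  fin_cases i <;> fin_cases k <;> simp at hik <;>
    simp [qCov, Fin.sum_univ_two, pd_snd_aCov_webE x y hy hx, aCov_webE x y hy, Gam_webE,
      inv_fbar_webE x y hy, inv_ftil_webE] <;>
    field_simp

end webE

/-- For the web `webE` on the domain `y¹ ≠ −1, y² ≠ −1, x¹x² ≠ 1`, writing
`a₁ = 1/((1+y¹)(1−x¹x²))` and `a₂ = 1/((1+y²)(1−x¹x²))` for the components of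
its torsion covector, the covariant derivatives satisfy
`p₁₁ = p₂₂ = 0`, `p₁₂ = q₁₂ = a₁(a₁x¹ + a₂)`, `p₂₁ = q₂₁ = a₂(a₂x² + a₁)`,
`q₁₁ = −a₁(a₂x² + a₁)`, `q₂₂ = −a₂(a₁x¹ + a₂)`, and the isoclinicity
invariants satisfy `p = q = (a₁²x¹ − a₂²x²)/2` (classes E₁₃₁ and G₃). -/
theorem webE_covariant_derivatives (x y : Fin 2 → ℝ)
    (h1 : y 0 ≠ -1) (h2 : y 1 ≠ -1) (h3 : x 0 * x 1 ≠ 1)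
    (a₁ a₂ : ℝ)
    (ha₁ : a₁ = 1 / ((1 + y 0) * (1 - x 0 * x 1)))
    (ha₂ : a₂ = 1 / ((1 + y 1) * (1 - x 0 * x 1))) :
    pCov webE 0 0 x y = 0 ∧ pCov webE 1 1 x y = 0 ∧
    pCov webE 0 1 x y = a₁ * (a₁ * x 0 + a₂) ∧
    qCov webE 0 1 x y = a₁ * (a₁ * x 0 + a₂) ∧
    pCov webE 1 0 x y = a₂ * (a₂ * x 1 + a₁) ∧
    qCov webE 1 0 x y = a₂ * (a₂ * x 1 + a₁) ∧
    qCov webE 0 0 x y = -(a₁ * (a₂ * x 1 + a₁)) ∧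
    qCov webE 1 1 x y = -(a₂ * (a₁ * x 0 + a₂)) ∧
    pIso webE x y = (a₁^2 * x 0 - a₂^2 * x 1) / 2 ∧
    qIso webE x y = (a₁^2 * x 0 - a₂^2 * x 1) / 2 := by
  have hy : ∀ j, 1 + y j ≠ 0 :=
    Fin.forall_fin_two.2 ⟨fun h => h1 (by linarith), fun h => h2 (by linarith)⟩
  have hx : 1 - x 0 * x 1 ≠ 0 := sub_ne_zero.2 h3.symm
  have ha : aCov webE 0 x y = a₁ ∧ aCov webE 1 x y = a₂ := by
    simp only [aCov_webE x y hy, ha₁, ha₂, one_div, Fin.isValue, and_self]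
  have P01 := pCov_webE_of_ne x y hy hx zero_ne_one
  have P10 := pCov_webE_of_ne x y hy hx one_ne_zero
  have Q01 := qCov_webE_of_ne x y hy hx zero_ne_one
  have Q10 := qCov_webE_of_ne x y hy hx one_ne_zero
  have Q00 := qCov_webE_self x y hy hx zero_ne_one
  have Q11 := qCov_webE_self x y hy hx one_ne_zero
  rw [ha.1, ha.2] at P01 P10 Q01 Q10 Q00 Q11
  refine ⟨pCov_webE_self x y hy hx 0, pCov_webE_self x y hy hx 1, P01, Q01, P10, Q10, Q00, Q11,
    ?_, ?_⟩
  · rw [pIso, P01, P10]; ring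
  · rw [qIso, Q01, Q10]; ring

end
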